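/- Let X_i, Y_i, Z_i (1 ≤ i ≤ n) be 3n mutually independent, all values a.s. distinct, with X_i, Y_i, Z_i ~ F_i nonnegative. Let Y* = max_i Y_i and fix a permutation π. The stopping rule that hires the first (in order π) index π(t) such that X_{π(t)} > Y*, all earlier X_{π(s)} < Y* for s < t, and Z_{π(s)} < Y* for all s ≥ t, hires a candidate whose expected value is at least (1/9)·E[max_i X_i]. -/

import Mathlib

/-!
Permuting the three entries `X i, Y i, Z i` of every column independently gives a group of
`6 ^ n` symmetries, and each of them preserves the joint law, by independence and equality of the
laws within a column. If all `3n` values are distinct, at least a `1/9` fraction of these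
symmetries moves the overall maximum into the `X`-row and the second largest value into the
`Y`-row (a fraction `1/6` if both sit in one column, `1/3 · 1/3` otherwise), and on such an array
the rule hires exactly the overall maximum. Averaging over the group gives
`(6 ^ n / 9) · E[max X] ≤ 6 ^ n · E[ALG]`.
-/

open Finset MeasureTheory ProbabilityTheory
open scoped Classical

def IsTopTwo {ι α : Type*} [LT α] (v : ι → α) (a b : ι) : Prop :=
  (∀ q, q ≠ a → v q < v a) ∧ ∀ q, q ≠ a → q ≠ b → v q < v b

theorem exists_isTopTwo {ι α : Type*} [Fintype ι] [Nontrivial ι] [LinearOrder α] {v : ι → α}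
    (hv : v.Injective) : ∃ a b, b ≠ a ∧ IsTopTwo v a b := by
  obtain ⟨a, -, ha⟩ := exists_max_image univ v univ_nonempty
  obtain ⟨c, hc⟩ := exists_ne a
  obtain ⟨b, hb, hb'⟩ := exists_max_image (univ.erase a) v ⟨c, mem_erase.2 ⟨hc, mem_univ c⟩⟩
  refine ⟨a, b, ne_of_mem_erase hb, fun q hq => (ha q (mem_univ q)).lt_of_ne (hv.ne hq),
    fun q hqa hqb => (hb' q (mem_erase.2 ⟨hqa, mem_univ q⟩)).lt_of_ne (hv.ne hqb)⟩

theorem IsTopTwo.apply_le_left {ι α : Type*} [Preorder α] {v : ι → α} {a b : ι}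
    (h : IsTopTwo v a b) (q : ι) : v q ≤ v a := by
  by_cases hq : q = a
  · rw [hq]
  · exact (h.1 q hq).le

theorem IsTopTwo.comp_equiv {ι α : Type*} [LT α] {v : ι → α} (e : ι ≃ ι) {a b : ι}
    (h : IsTopTwo v (e a) (e b)) : IsTopTwo (v ∘ e) a b :=
  ⟨fun q hq => h.1 (e q) (e.injective.ne hq),
    fun q hqa hqb => h.2 (e q) (e.injective.ne hqa) (e.injective.ne hqb)⟩

theorem six_le_mul_card_perm_fin_three (a b : Prop) [Decidable a] [Decidable b] (r s : Fin 3)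
    (h : a → b → r ≠ s) :
    6 ≤ (if a then 3 else 1) * (if b then 3 else 1) *
      #{σ : Equiv.Perm (Fin 3) | (a → σ 0 = r) ∧ (b → σ 1 = s)} := by
  by_cases ha : a <;> by_cases hb : b <;> simp only [ha, hb, if_true, if_false] at h ⊢ <;>
    revert r s <;> decide

theorem six_pow_le_nine_mul_card {n : ℕ} (i j : Fin n) (r s : Fin 3) (h : i = j → r ≠ s) :
    6 ^ n ≤ 9 * #{g : Fin n → Equiv.Perm (Fin 3) | g i 0 = r ∧ g j 1 = s} := by
  -- the weights `3` of the (at most two) constrained columns multiply to `9`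
  set S : Fin n → Finset (Equiv.Perm (Fin 3)) :=
    fun k => {σ | (k = i → σ 0 = r) ∧ (k = j → σ 1 = s)}
  have hS : ({g | g i 0 = r ∧ g j 1 = s} : Finset (Fin n → Equiv.Perm (Fin 3))) =
      Fintype.piFinset S := by
    ext g
    simp only [mem_filter, mem_univ, true_and, Fintype.mem_piFinset, S]
    exact ⟨fun ⟨hi, hj⟩ k => ⟨fun hk => hk ▸ hi, fun hk => hk ▸ hj⟩,
      fun hg => ⟨(hg i).1 rfl, (hg j).2 rfl⟩⟩
  rw [hS, Fintype.card_piFinset]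
  calc 6 ^ n = ∏ _k : Fin n, 6 := by simp
    _ ≤ ∏ k, ((if k = i then 3 else 1) * (if k = j then 3 else 1) * #(S k)) :=
      prod_le_prod' fun k _ =>
        six_le_mul_card_perm_fin_three _ _ r s fun hi hj => h (hi.symm.trans hj)
    _ = 9 * ∏ k, #(S k) := by
      rw [prod_mul_distrib, prod_mul_distrib, prod_ite_eq', prod_ite_eq']
      simp

/-- Rows `0, 1, 2` of the array `v` hold the values `X i`, `Y i`, `Z i`. -/
noncomputable def hiredValue {n : ℕ} (π : Equiv.Perm (Fin n)) (v : Fin 3 × Fin n → ℝ) : ℝ :=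
  ∑ t : Fin n,
    if (⨆ i, v (1, i)) < v (0, π t) ∧ (∀ s, s < t → v (0, π s) < ⨆ i, v (1, i)) ∧
        (∀ s, t ≤ s → v (2, π s) < ⨆ i, v (1, i))
    then v (0, π t) else 0

section hiredValue

variable {n : ℕ} (π : Equiv.Perm (Fin n)) {v : Fin 3 × Fin n → ℝ}

theorem measurable_hiredValue : Measurable (hiredValue π) := by
  have hM : Measurable fun v : Fin 3 × Fin n → ℝ => ⨆ i, v (1, i) :=
    .iSup fun i => measurable_pi_apply _
  exact Finset.measurable_sum _ fun t _ =>
    .ite (Measurable.setOf (by fun_prop)) (measurable_pi_apply _) measurable_const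

theorem hiredValue_nonneg (hv : ∀ q, 0 ≤ v q) : 0 ≤ hiredValue π v :=
  sum_nonneg fun t _ => by split_ifs <;> simp [hv]

theorem hiredValue_le (hv : ∀ q, 0 ≤ v q) : hiredValue π v ≤ n * ⨆ i, v (0, i) := by
  have hle : ∀ i, v (0, i) ≤ ⨆ i, v (0, i) := le_ciSup (Set.finite_range _).bddAbove
  calc hiredValue π v ≤ ∑ _t : Fin n, ⨆ i, v (0, i) :=
        sum_le_sum fun t _ => by split_ifs <;> simp [hle, (hv _).trans (hle (π t))]
    _ = n * ⨆ i, v (0, i) := by simp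

theorem hiredValue_eq_of_isTopTwo {i j : Fin n} (h : IsTopTwo v (0, i) (1, j)) :
    hiredValue π v = v (0, i) := by
  have : Nonempty (Fin n) := ⟨i⟩
  set M := ⨆ k, v (1, k)
  have hjM : v (1, j) ≤ M := le_ciSup (f := fun k => v (1, k)) (Set.finite_range _).bddAbove j
  have hMi : M < v (0, i) := by
    obtain ⟨k, hk⟩ := exists_eq_ciSup_of_finite (f := fun k => v (1, k))
    rw [show M = v (1, k) from hk.symm]
    exact h.1 _ (by simp)
  have hbelow : ∀ q : Fin 3 × Fin n, q ≠ (0, i) → q.1 ≠ 1 → v q < M := fun q h0 h1 =>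
    (h.2 q h0 (by rintro rfl; exact h1 rfl)).trans_le hjM
  unfold hiredValue
  rw [sum_eq_single (π.symm i)]
  · rw [π.apply_symm_apply, if_pos]
    refine ⟨hMi, fun s hs => hbelow _ ?_ (by simp), fun s _ => hbelow _ (by simp) (by simp)⟩
    simpa [π.eq_symm_apply] using hs.ne
  · intro t _ ht
    rw [if_neg]
    refine fun hc => (hbelow (0, π t) ?_ (by simp)).not_gt hc.1
    simpa [← π.eq_symm_apply] using ht
  · simp

theorem six_pow_div_nine_mul_iSup_le_sum_hiredValue (hn : 0 < n) (hinj : v.Injective)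
    (hv : ∀ q, 0 ≤ v q) :
    (6 ^ n / 9 : ℝ) * ⨆ i, v (0, i) ≤
      ∑ g : Fin n → Equiv.Perm (Fin 3), hiredValue π (v ∘ Equiv.prodCongrLeft g) := by
  have : Nonempty (Fin n) := ⟨⟨0, hn⟩⟩
  obtain ⟨a, b, hba, hab⟩ := exists_isTopTwo hinj
  set good : Finset (Fin n → Equiv.Perm (Fin 3)) := {g | g a.2 0 = a.1 ∧ g b.2 1 = b.1}
  have hgood : ∀ g ∈ good, hiredValue π (v ∘ Equiv.prodCongrLeft g) = v a := by
    intro g hg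
    simp only [good, mem_filter, mem_univ, true_and] at hg
    have ha : Equiv.prodCongrLeft g (0, a.2) = a := by simp [hg.1]
    have hb : Equiv.prodCongrLeft g (1, b.2) = b := by simp [hg.2]
    rw [hiredValue_eq_of_isTopTwo π (IsTopTwo.comp_equiv _ (ha ▸ hb ▸ hab)), Function.comp_apply,
      ha]
  have hcard : (6 ^ n / 9 : ℝ) ≤ #good := by
    rw [div_le_iff₀ (by norm_num), mul_comm]
    exact_mod_cast six_pow_le_nine_mul_card a.2 b.2 a.1 b.1 fun h hr =>
      hba (Prod.ext hr.symm h.symm)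
  calc (6 ^ n / 9 : ℝ) * ⨆ i, v (0, i) ≤ 6 ^ n / 9 * v a := by
        gcongr
        exact ciSup_le fun i => hab.apply_le_left _
    _ ≤ #good * v a := mul_le_mul_of_nonneg_right hcard (hv a)
    _ = ∑ g ∈ good, hiredValue π (v ∘ Equiv.prodCongrLeft g) := by
        rw [sum_congr rfl hgood, sum_const, nsmul_eq_mul]
    _ ≤ _ := sum_le_sum_of_subset_of_nonneg (subset_univ _) fun g _ _ =>
        hiredValue_nonneg π fun q => hv _

end hiredValue

theorem ProbabilityTheory.iIndepFun.identDistrib_comp_equiv {Ω ι β : Type*} [MeasurableSpace Ω]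
    [MeasurableSpace β] [Fintype ι] {μ : Measure Ω} {f : ι → Ω → β}
    (hf : ∀ i, AEMeasurable (f i) μ) (h : iIndepFun f μ) (e : ι ≃ ι)
    (he : ∀ i, μ.map (f (e i)) = μ.map (f i)) :
    IdentDistrib (fun ω i => f (e i) ω) (fun ω i => f i ω) μ μ where
  aemeasurable_fst := aemeasurable_pi_lambda _ fun i => hf (e i)
  aemeasurable_snd := aemeasurable_pi_lambda _ hf
  map_eq := by
    rw [(h.precomp e.injective).map_fun_eq_pi_map fun i => hf (e i), h.map_fun_eq_pi_map hf,
      funext he]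

theorem integral_le_card_mul_integral_of_le_sum {Ω ι E : Type*} [MeasurableSpace Ω]
    [MeasurableSpace E] [Fintype ι] {μ : Measure Ω} {W : ι → Ω → E} {W₀ : Ω → E} {h : E → ℝ}
    {f : Ω → ℝ} (hW : ∀ i, IdentDistrib (W i) W₀ μ μ) (hh : Measurable h)
    (hf : Integrable f μ) (hhW₀ : Integrable (fun ω => h (W₀ ω)) μ)
    (hle : ∀ᵐ ω ∂μ, f ω ≤ ∑ i, h (W i ω)) :
    ∫ ω, f ω ∂μ ≤ Fintype.card ι * ∫ ω, h (W₀ ω) ∂μ := by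
  have hhW : ∀ i, IdentDistrib (fun ω => h (W i ω)) (fun ω => h (W₀ ω)) μ μ :=
    fun i => (hW i).comp hh
  have hint : ∀ i, Integrable (fun ω => h (W i ω)) μ := fun i => (hhW i).integrable_iff.2 hhW₀
  calc ∫ ω, f ω ∂μ ≤ ∫ ω, ∑ i, h (W i ω) ∂μ :=
        integral_mono_ae hf (integrable_finsetSum _ fun i _ => hint i) hle
    _ = ∑ i, ∫ ω, h (W i ω) ∂μ := integral_finsetSum _ fun i _ => hint i
    _ = Fintype.card ι * ∫ ω, h (W₀ ω) ∂μ := by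
        simp [fun i => (hhW i).integral_eq]

section integral

variable {Ω : Type*} [MeasurableSpace Ω] {μ : Measure Ω} {n : ℕ} (π : Equiv.Perm (Fin n))

theorem integrable_hiredValue {V : Ω → Fin 3 × Fin n → ℝ} (hV : Measurable V)
    (hpos : ∀ᵐ ω ∂μ, ∀ q, 0 ≤ V ω q) (hint : Integrable (fun ω => ⨆ i, V ω (0, i)) μ) :
    Integrable (fun ω => hiredValue π (V ω)) μ :=
  (hint.const_mul n).mono' ((measurable_hiredValue π).comp hV).aestronglyMeasurable
    (hpos.mono fun ω h => by
      rw [Real.norm_of_nonneg (hiredValue_nonneg π h)]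
      exact hiredValue_le π h)

theorem one_div_nine_mul_integral_iSup_le_integral_hiredValue (hn : 0 < n)
    {f : Fin 3 × Fin n → Ω → ℝ} (hf : ∀ q, Measurable (f q)) (hindep : iIndepFun f μ)
    (hlaw : ∀ r r' i, μ.map (f (r, i)) = μ.map (f (r', i)))
    (hpos : ∀ᵐ ω ∂μ, ∀ q, 0 ≤ f q ω) (hinj : ∀ᵐ ω ∂μ, Function.Injective fun q => f q ω)
    (hint : Integrable (fun ω => ⨆ i, f (0, i) ω) μ) :
    1 / 9 * ∫ ω, ⨆ i, f (0, i) ω ∂μ ≤ ∫ ω, hiredValue π (fun q => f q ω) ∂μ := by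
  have hexch : ∀ g : Fin n → Equiv.Perm (Fin 3),
      IdentDistrib (fun ω q => f (Equiv.prodCongrLeft g q) ω) (fun ω q => f q ω) μ μ :=
    fun g => hindep.identDistrib_comp_equiv (fun q => (hf q).aemeasurable) _ fun q =>
      hlaw _ _ _
  have key := integral_le_card_mul_integral_of_le_sum hexch (measurable_hiredValue π)
    (hint.const_mul (6 ^ n / 9)) (integrable_hiredValue π (measurable_pi_lambda _ hf) hpos hint)
    ((hpos.and hinj).mono fun ω h => six_pow_div_nine_mul_iSup_le_sum_hiredValue π hn h.2 h.1)
  have hcard : (Fintype.card (Fin n → Equiv.Perm (Fin 3)) : ℝ) = 6 ^ n := by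
    simp [Fintype.card_perm, Nat.factorial]
  rw [integral_const_mul, hcard] at key
  refine le_of_mul_le_mul_left ?_ (by positivity : (0 : ℝ) < 6 ^ n)
  linarith

end integral

theorem stmt_13_general {Ω : Type*} [MeasurableSpace Ω] (μ : Measure Ω)
    (n : ℕ) (hn : 0 < n) (X Y Z : Fin n → Ω → ℝ)
    (hmX : ∀ i, Measurable (X i)) (hmY : ∀ i, Measurable (Y i))
    (hmZ : ∀ i, Measurable (Z i))
    (hnonneg : ∀ᵐ ω ∂μ, ∀ i, 0 ≤ X i ω ∧ 0 ≤ Y i ω ∧ 0 ≤ Z i ω)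
    (hindep : iIndepFun
      (fun (q : Fin 3 × Fin n) => ![X, Y, Z] q.1 q.2) μ)
    (hidY : ∀ i, IdentDistrib (X i) (Y i) μ μ)
    (hidZ : ∀ i, IdentDistrib (X i) (Z i) μ μ)
    (hdistinct : ∀ᵐ ω ∂μ,
      Function.Injective (fun q : Fin 3 × Fin n => ![X, Y, Z] q.1 q.2 ω))
    (π : Equiv.Perm (Fin n))
    (hint : Integrable (fun ω => ⨆ i, X i ω) μ) :
    (1 / 9 : ℝ) * ∫ ω, (⨆ i, X i ω) ∂μ ≤
      ∫ ω, ∑ t : Fin n,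
        (if ((⨆ i, Y i ω) < X (π t) ω ∧
             (∀ s : Fin n, s < t → X (π s) ω < ⨆ i, Y i ω) ∧
             (∀ s : Fin n, t ≤ s → Z (π s) ω < ⨆ i, Y i ω))
         then X (π t) ω else 0) ∂μ := by
  have hf : ∀ q : Fin 3 × Fin n, Measurable (![X, Y, Z] q.1 q.2) := by
    rintro ⟨r, i⟩
    fin_cases r
    exacts [hmX i, hmY i, hmZ i]
  have hlaw : ∀ r i, μ.map (![X, Y, Z] r i) = μ.map (X i) := by
    intro r i
    fin_cases r
    exacts [rfl, (hidY i).map_eq.symm, (hidZ i).map_eq.symm]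
  have hpos : ∀ᵐ ω ∂μ, ∀ q : Fin 3 × Fin n, 0 ≤ ![X, Y, Z] q.1 q.2 ω := hnonneg.mono fun ω h => by
    rintro ⟨r, i⟩
    fin_cases r
    exacts [(h i).1, (h i).2.1, (h i).2.2]
  exact one_div_nine_mul_integral_iSup_le_integral_hiredValue π hn hf hindep
    (fun r r' i => (hlaw r i).trans (hlaw r' i).symm) hpos hdistinct hint

/-- Competitiveness of the double-sample online stopping rule: it hires a
candidate whose expected value is at least `(1/9)·E[max_i X_i]`. -/
theorem stmt_13 {Ω : Type*} [MeasurableSpace Ω] (μ : Measure Ω)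
    [IsProbabilityMeasure μ]
    (n : ℕ) (hn : 0 < n) (X Y Z : Fin n → Ω → ℝ)
    (hmX : ∀ i, Measurable (X i)) (hmY : ∀ i, Measurable (Y i))
    (hmZ : ∀ i, Measurable (Z i))
    (hnonneg : ∀ᵐ ω ∂μ, ∀ i, 0 ≤ X i ω ∧ 0 ≤ Y i ω ∧ 0 ≤ Z i ω)
    (hindep : iIndepFun
      (fun (q : Fin 3 × Fin n) => ![X, Y, Z] q.1 q.2) μ)
    (hidY : ∀ i, IdentDistrib (X i) (Y i) μ μ)
    (hidZ : ∀ i, IdentDistrib (X i) (Z i) μ μ)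
    (hdistinct : ∀ᵐ ω ∂μ,
      Function.Injective (fun q : Fin 3 × Fin n => ![X, Y, Z] q.1 q.2 ω))
    (π : Equiv.Perm (Fin n))
    (hint : Integrable (fun ω => ⨆ i, X i ω) μ) :
    (1 / 9 : ℝ) * ∫ ω, (⨆ i, X i ω) ∂μ ≤
      ∫ ω, ∑ t : Fin n,
        (if ((⨆ i, Y i ω) < X (π t) ω ∧
             (∀ s : Fin n, s < t → X (π s) ω < ⨆ i, Y i ω) ∧
             (∀ s : Fin n, t ≤ s → Z (π s) ω < ⨆ i, Y i ω))
         then X (π t) ω else 0) ∂μ :=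
  stmt_13_general μ n hn X Y Z hmX hmY hmZ hnonneg hindep hidY hidZ hdistinct π hint
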